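/- The sum Σ_{p≥0} Z(p+1)·12^{-p} equals (3-√3)/6, and the sum Σ_{p≥0} p·Z(p+1)·12^{-p} equals √3/6. -/

import Mathlib

/-! With `w n = (2n-1)‼/(2n)‼`, the general term of both series is explicit in `w`:
`Z(p+2)/12^(p+1) = (√3/4) · w p / (2(p+1)(p+2))`. The recursion `w (n+1) = w n · (2n+1)/(2n+2)`
makes these terms telescope, as `(√3/4)(g p - g (p+1))` with `g n = w n / (3(n+1))`, resp. (after
multiplying by `p+1`) with `u n = w n (3n+2) / (3(n+1))`. Both `g` and `u` decrease to `0`, because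
`w n ^ 2 ≤ 1/(2n+1)`, so the sums are `Z(1) + (√3/4) g 0` and `(√3/4) u 0`. -/

/-- `Z(1) = (2-√3)/4` and `Z(p) = 6^p·(2p-5)!!/(8√3·p!)` for `p ≥ 2`. -/
noncomputable def Zfun : ℕ → ℝ := fun p =>
  if p = 1 then (2 - Real.sqrt 3) / 4
  else 6 ^ p * Nat.doubleFactorial (2 * p - 5) / (8 * Real.sqrt 3 * Nat.factorial p)

open Filter Topology Nat

theorem hasSum_sub_succ_of_antitone {g : ℕ → ℝ} {l : ℝ} (hg : Antitone g)
    (hlim : Tendsto g atTop (𝓝 l)) : HasSum (fun n ↦ g n - g (n + 1)) (g 0 - l) := by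
  rw [hasSum_iff_tendsto_nat_of_nonneg (fun n ↦ sub_nonneg.2 (hg n.le_succ))]
  simp only [Finset.sum_range_sub']
  exact hlim.const_sub _

/-- Equal to `Nat.centralBinom n / 4 ^ n`. -/
noncomputable def wallisRatio (n : ℕ) : ℝ := (2 * n - 1)‼ / (2 * n)‼

theorem wallisRatio_nonneg (n : ℕ) : 0 ≤ wallisRatio n := by
  unfold wallisRatio; positivity

theorem wallisRatio_succ (n : ℕ) :
    wallisRatio (n + 1) = wallisRatio n * ((2 * n + 1) / (2 * n + 2)) := by
  have hodd : 2 * (n + 1) - 1 = 2 * n + 1 := by omega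
  have heven : 2 * (n + 1) = 2 * n + 2 := by ring
  have hpos : (0 : ℝ) < (2 * n)‼ := mod_cast doubleFactorial_pos _
  unfold wallisRatio
  rw [hodd, heven, doubleFactorial_add_one, doubleFactorial_add_two]
  push_cast
  field_simp

theorem wallisRatio_sq_le (n : ℕ) : wallisRatio n ^ 2 ≤ 1 / (2 * n + 1) := by
  induction n with
  | zero => simp [wallisRatio]
  | succ k ih =>
    set x : ℝ := (k : ℝ)
    have hx : 0 ≤ x := k.cast_nonneg
    rw [wallisRatio_succ, mul_pow, Nat.cast_succ]
    calc wallisRatio k ^ 2 * ((2 * x + 1) / (2 * x + 2)) ^ 2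
        ≤ 1 / (2 * x + 1) * ((2 * x + 1) / (2 * x + 2)) ^ 2 := by gcongr
      _ = (2 * x + 1) / (2 * x + 2) ^ 2 := by field_simp
      _ ≤ 1 / (2 * (x + 1) + 1) := by
        rw [div_le_div_iff₀ (by positivity) (by positivity)]
        nlinarith

theorem tendsto_wallisRatio : Tendsto wallisRatio atTop (𝓝 0) := by
  have hsq : Tendsto (fun n ↦ wallisRatio n ^ 2) atTop (𝓝 0) :=
    squeeze_zero (fun n ↦ by positivity) wallisRatio_sq_le <|
      squeeze_zero (fun n ↦ by positivity)
        (fun n ↦ one_div_le_one_div_of_le (by positivity) (by linarith [n.cast_nonneg (α := ℝ)]))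
        tendsto_one_div_add_atTop_nhds_zero_nat
  simpa [Real.sqrt_sq (wallisRatio_nonneg _)] using hsq.sqrt

theorem Zfun_add_two_div_twelve_pow (p : ℕ) :
    Zfun (p + 2) / 12 ^ (p + 1) = √3 / 4 * (wallisRatio p / (2 * (p + 1) * (p + 2))) := by
  have hodd : 2 * (p + 2) - 5 = 2 * p - 1 := by omega
  have hfac : ((p + 2)! : ℝ) = (p + 2) * (p + 1) * p ! := by
    push_cast [factorial_succ]; ring
  have hpos : (0 : ℝ) < p ! := mod_cast factorial_pos p
  unfold Zfun wallisRatio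
  rw [if_neg (by omega), hodd, hfac, doubleFactorial_two_mul]
  push_cast
  field_simp
  rw [Real.sq_sqrt (by norm_num), show (12 : ℝ) = 6 * 2 by norm_num, mul_pow]
  ring

theorem wallisRatio_div_sub_succ (n : ℕ) :
    wallisRatio n / (3 * (n + 1)) - wallisRatio (n + 1) / (3 * (↑(n + 1) + 1)) =
      wallisRatio n / (2 * (n + 1) * (n + 2)) := by
  rw [wallisRatio_succ]
  push_cast
  field_simp
  ring

theorem wallisRatio_mul_sub_succ (n : ℕ) :
    wallisRatio n * (3 * n + 2) / (3 * (n + 1)) -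
        wallisRatio (n + 1) * (3 * ↑(n + 1) + 2) / (3 * (↑(n + 1) + 1)) =
      wallisRatio n / (2 * (n + 2)) := by
  rw [wallisRatio_succ]
  push_cast
  field_simp
  ring

theorem hasSum_Zfun_succ_div_twelve_pow :
    HasSum (fun p : ℕ ↦ Zfun (p + 1) / 12 ^ p) ((3 - √3) / 6) := by
  set g : ℕ → ℝ := fun n ↦ wallisRatio n / (3 * (n + 1))
  have hg : Antitone g := antitone_nat_of_succ_le fun n ↦ by
    rw [← sub_nonneg, wallisRatio_div_sub_succ]
    have := wallisRatio_nonneg n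
    positivity
  have hlim : Tendsto g atTop (𝓝 0) :=
    tendsto_wallisRatio.div_atTop <| Tendsto.const_mul_atTop three_pos <|
      tendsto_atTop_add_const_right _ 1 tendsto_natCast_atTop_atTop
  have htail : HasSum (fun p : ℕ ↦ Zfun (p + 1 + 1) / 12 ^ (p + 1)) (√3 / 12) := by
    have hterm : (fun p : ℕ ↦ Zfun (p + 1 + 1) / 12 ^ (p + 1)) =
        fun p ↦ √3 / 4 * (g p - g (p + 1)) := funext fun p ↦ by
      simp only [g, wallisRatio_div_sub_succ, Zfun_add_two_div_twelve_pow]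
    rw [hterm, show √3 / 12 = √3 / 4 * (g 0 - 0) by simp [g, wallisRatio]; ring]
    exact (hasSum_sub_succ_of_antitone hg hlim).mul_left _
  convert HasSum.zero_add (f := fun p : ℕ ↦ Zfun (p + 1) / 12 ^ p) htail using 1
  norm_num [Zfun]
  ring

theorem hasSum_mul_Zfun_succ_div_twelve_pow :
    HasSum (fun p : ℕ ↦ (p : ℝ) * Zfun (p + 1) / 12 ^ p) (√3 / 6) := by
  set u : ℕ → ℝ := fun n ↦ wallisRatio n * (3 * n + 2) / (3 * (n + 1))
  have hu : Antitone u := antitone_nat_of_succ_le fun n ↦ by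
    rw [← sub_nonneg, wallisRatio_mul_sub_succ]
    have := wallisRatio_nonneg n
    positivity
  have hlim : Tendsto u atTop (𝓝 0) := by
    refine squeeze_zero (fun n ↦ ?_) (fun n ↦ ?_) tendsto_wallisRatio
    · have := wallisRatio_nonneg n
      positivity
    · rw [div_le_iff₀ (by positivity)]
      nlinarith [wallisRatio_nonneg n]
  have htail : HasSum (fun p : ℕ ↦ ((p + 1 : ℕ) : ℝ) * Zfun (p + 1 + 1) / 12 ^ (p + 1))
      (√3 / 6) := by
    have hterm : (fun p : ℕ ↦ ((p + 1 : ℕ) : ℝ) * Zfun (p + 1 + 1) / 12 ^ (p + 1)) =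
        fun p ↦ √3 / 4 * (u p - u (p + 1)) := funext fun p ↦ by
      rw [mul_div_assoc, Zfun_add_two_div_twelve_pow, wallisRatio_mul_sub_succ]
      push_cast
      field_simp
    rw [hterm, show √3 / 6 = √3 / 4 * (u 0 - 0) by simp [u, wallisRatio]; ring]
    exact (hasSum_sub_succ_of_antitone hu hlim).mul_left _
  simpa using HasSum.zero_add (f := fun p : ℕ ↦ (p : ℝ) * Zfun (p + 1) / 12 ^ p) htail

/-- `Σ_{p≥0} Z(p+1)·12^{-p} = (3-√3)/6` and `Σ_{p≥0} p·Z(p+1)·12^{-p} = √3/6`. -/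
theorem Z_sums :
    Summable (fun p : ℕ => Zfun (p + 1) / 12 ^ p) ∧
    Summable (fun p : ℕ => (p : ℝ) * Zfun (p + 1) / 12 ^ p) ∧
    ∑' p : ℕ, Zfun (p + 1) / 12 ^ p = (3 - Real.sqrt 3) / 6 ∧
    ∑' p : ℕ, (p : ℝ) * Zfun (p + 1) / 12 ^ p = Real.sqrt 3 / 6 :=
  ⟨hasSum_Zfun_succ_div_twelve_pow.summable, hasSum_mul_Zfun_succ_div_twelve_pow.summable,
    hasSum_Zfun_succ_div_twelve_pow.tsum_eq, hasSum_mul_Zfun_succ_div_twelve_pow.tsum_eq⟩
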